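/- arXiv:2307.06020 — 3 statements merged into one kernel-verified Lean document; each statement's English description precedes it below -/
import Mathlib

section
/- Let X = (X_t, φ_s^t) and Y = (Y_t, ψ_s^t) be persistence modules over a field K with fixed bases B_X = {x_1,…,x_N} and B_Y = {y_1,…,y_M}, and let α : X → Y be an ε-morphism. Then: (1) whenever Mat_{B_X}^{B_Y}(α)(j,i) ≠ 0 one has birth(y_j) ≤ birth(x_i)+ε < death(y_j) ≤ death(x_i)+ε; and (2) α is completely determined by its matrix: for every s ∈ ℝ and scalars λ_i ∈ K, α_s( Σ_{i : birth(x_i) ≤ s < death(x_i)} λ_i φ_{birth(x_i)}^s(x_i) ) = Σ_{i : birth(x_i) ≤ s < death(x_i)} λ_i Σ_{j : birth(y_j) ≤ birth(x_i)+ε < death(y_j)} Mat_{B_X}^{B_Y}(α)(j,i) ψ_{birth(y_j)}^{s+ε}(y_j). -/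
open scoped BigOperators

universe u v

/-- A persistence module over a field `K`. -/
structure PersistenceModule (K : Type u) [Field K] where
  space : ℝ → Type v
  [instAdd : ∀ t, AddCommGroup (space t)]
  [instMod : ∀ t, Module K (space t)]
  trans : ∀ s t : ℝ, s ≤ t → (space s →ₗ[K] space t)
  trans_self : ∀ (t : ℝ) (h : t ≤ t), trans t t h = LinearMap.id
  trans_trans : ∀ (r s t : ℝ) (hrs : r ≤ s) (hst : s ≤ t) (x : space r),
      trans s t hst (trans r s hrs x) = trans r t (hrs.trans hst) x

attribute [instance] PersistenceModule.instAdd PersistenceModule.instMod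

namespace PersistenceModule

variable {K : Type u} [Field K]

/-- `x ∈ X_t` is born at `t` if it is not in the image of any earlier transition map. -/
def BornAt (X : PersistenceModule K) (t : ℝ) (x : X.space t) : Prop :=
  ∀ (s : ℝ) (h : s < t), x ∉ Set.range (X.trans s t h.le)

/-- The death time of an element `x ∈ X_t`. -/
noncomputable def death (X : PersistenceModule K) (t : ℝ) (x : X.space t) : ℝ :=
  sInf {s : ℝ | ∃ h : t < s, X.trans t s h.le x = 0}

/-- `x` is a basis of `X` realizing the intervals `[b i, d i)`. -/
def IsBasisFamily {ι : Type*} (X : PersistenceModule K) (b d : ι → ℝ)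
    (x : ∀ i, X.space (b i)) : Prop :=
  (∀ i, X.BornAt (b i) (x i)) ∧
  (∀ i, X.death (b i) (x i) = d i) ∧
  (∀ t : ℝ,
    LinearIndependent K
      (fun i : {i : ι // b i ≤ t ∧ t < d i} => X.trans (b i.1) t i.2.1 (x i.1)) ∧
    Submodule.span K (Set.range
      (fun i : {i : ι // b i ≤ t ∧ t < d i} => X.trans (b i.1) t i.2.1 (x i.1))) = ⊤)

open scoped Classical in
/-- The image of the basis element `x j` at height `h` (or `0` if not yet born). -/
noncomputable def pushTo {ι : Type*} (X : PersistenceModule K) (b : ι → ℝ)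
    (x : ∀ i, X.space (b i)) (h : ℝ) (j : ι) : X.space h :=
  if hb : b j ≤ h then X.trans (b j) h hb (x j) else 0

end PersistenceModule

/-- An `ε`-morphism of persistence modules. -/
structure EpsMorphism {K : Type u} [Field K] (X Y : PersistenceModule K) (ε : ℝ) where
  maps : ∀ r r' : ℝ, r + ε = r' → (X.space r →ₗ[K] Y.space r')
  comm : ∀ (s t s' t' : ℝ) (hs : s + ε = s') (ht : t + ε = t') (hst : s ≤ t)
      (x : X.space s),
    maps t t' ht (X.trans s t hst x) = Y.trans s' t' (by linarith) (maps s s' hs x)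

/-- A pair of `ε`-morphisms forming an `ε`-interleaving. -/
def IsInterleaving {K : Type u} [Field K] (X Y : PersistenceModule K) (ε : ℝ)
    (F : EpsMorphism X Y ε) (G : EpsMorphism Y X ε) : Prop :=
  (∀ (r r'' : ℝ) (h : r + ε + ε = r'') (hr : r ≤ r'') (x : X.space r),
      G.maps (r + ε) r'' (by linarith) (F.maps r (r + ε) rfl x) = X.trans r r'' hr x) ∧
  (∀ (r r'' : ℝ) (h : r + ε + ε = r'') (hr : r ≤ r'') (y : Y.space r),
      F.maps (r + ε) r'' (by linarith) (G.maps r (r + ε) rfl y) = Y.trans r r'' hr y)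

/-- `A` is the matrix of the `ε`-morphism `α` with respect to the bases `x` of `X`
(realizing `[bX i, dX i)`) and `y` of `Y` (realizing `[bY j, dY j)`). -/
def IsMatrixOf {K : Type u} [Field K] {X Y : PersistenceModule K} {ε : ℝ}
    {N M : ℕ} (α : EpsMorphism X Y ε)
    (bX dX : Fin N → ℝ) (x : ∀ i, X.space (bX i))
    (bY dY : Fin M → ℝ) (y : ∀ j, Y.space (bY j))
    (A : Matrix (Fin M) (Fin N) K) : Prop :=
  (∀ i, α.maps (bX i) (bX i + ε) rfl (x i)
      = ∑ j, A j i • Y.pushTo bY y (bX i + ε) j) ∧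
  (∀ (j : Fin M) (i : Fin N), ¬ (bY j ≤ bX i + ε ∧ bX i + ε < dY j) → A j i = 0)

/-- A basis transformation matrix. -/
def IsBasisTransformMatrix {K : Type u} [Field K] {N : ℕ} (b d : Fin N → ℝ)
    (A : Matrix (Fin N) (Fin N) K) : Prop :=
  (∀ i, A i i ≠ 0) ∧ ∀ j i, A j i ≠ 0 → b j ≤ b i ∧ d j ≤ d i

/-- The transformed family `A(B)`: `x_i^new = ∑ j A j i • φ(x_j)`. -/
noncomputable def transformBasis {K : Type u} [Field K] {N : ℕ} (X : PersistenceModule K)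
    (b : Fin N → ℝ) (x : ∀ i, X.space (b i)) (A : Matrix (Fin N) (Fin N) K)
    (i : Fin N) : X.space (b i) :=
  ∑ j, A j i • X.pushTo b x (b i) j

/-- The elementary matrix `e_{lk}^μ`: identity with extra entry `μ` in position `(k, l)`. -/
def eMat {K : Type u} [Field K] {N : ℕ} (l k : Fin N) (μ : K) : Matrix (Fin N) (Fin N) K :=
  1 + Matrix.single k l μ

open scoped Classical

namespace PersistenceModule

variable {K : Type u} [Field K] (X : PersistenceModule K)

theorem trans_eq_zero_of_death_lt {t u : ℝ} (htu : t ≤ u) (z : X.space t)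
    (hdies : ∃ s, ∃ h : t < s, X.trans t s h.le z = 0) (hu : X.death t z < u) :
    X.trans t u htu z = 0 := by
  obtain ⟨s, ⟨hts, hs⟩, hsu⟩ := exists_lt_of_csInf_lt hdies hu
  rw [← X.trans_trans t s u hts.le hsu.le, hs, map_zero]

variable {X} {ι : Type*} {b d : ι → ℝ} {x : ∀ i, X.space (b i)}

theorem pushTo_of_le {h : ℝ} {j : ι} (hb : b j ≤ h) :
    X.pushTo b x h j = X.trans (b j) h hb (x j) :=
  dif_pos hb

theorem pushTo_of_lt {h : ℝ} {j : ι} (hb : h < b j) : X.pushTo b x h j = 0 :=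
  dif_neg hb.not_ge

theorem trans_pushTo {h h' : ℝ} {j : ι} (hb : b j ≤ h) (hh : h ≤ h') :
    X.trans h h' hh (X.pushTo b x h j) = X.pushTo b x h' j := by
  rw [pushTo_of_le hb, pushTo_of_le (hb.trans hh), X.trans_trans]

theorem IsBasisFamily.eq_zero_of_forall_death_le (hX : X.IsBasisFamily b d x) {t : ℝ}
    (ht : ∀ i, d i ≤ t) (z : X.space t) : z = 0 := by
  have : IsEmpty {i // b i ≤ t ∧ t < d i} := ⟨fun i => (ht i.1).not_gt i.2.2⟩
  have hspan := (hX.2.2 t).2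
  rw [Set.range_eq_empty, Submodule.span_empty] at hspan
  exact (Submodule.mem_bot K).mp (hspan ▸ Submodule.mem_top)

theorem IsBasisFamily.exists_trans_eq_zero [Finite ι] (hX : X.IsBasisFamily b d x) (i : ι) :
    ∃ s, ∃ h : b i < s, X.trans (b i) s h.le (x i) = 0 := by
  obtain ⟨T, hT⟩ := Finite.exists_le d
  refine ⟨max T (b i) + 1, by linarith [le_max_right T (b i)], ?_⟩
  exact hX.eq_zero_of_forall_death_le (fun k => by linarith [hT k, le_max_left T (b i)]) _

theorem IsBasisFamily.birth_le_death [Finite ι] (hX : X.IsBasisFamily b d x) (i : ι) :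
    b i ≤ d i := by
  rw [← hX.2.1 i]
  exact le_csInf (hX.exists_trans_eq_zero i) fun s ⟨h, _⟩ => h.le

theorem IsBasisFamily.pushTo_eq_zero_of_death_lt [Finite ι] (hX : X.IsBasisFamily b d x)
    {u : ℝ} {j : ι} (hu : d j < u) : X.pushTo b x u j = 0 := by
  rw [pushTo_of_le ((hX.birth_le_death j).trans hu.le)]
  exact X.trans_eq_zero_of_death_lt _ _ (hX.exists_trans_eq_zero j) ((hX.2.1 j).trans_lt hu)

/-- The hypothesis `d j ≠ t` excludes elements dying exactly at `t`: nothing controls their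
image at `t`. -/
theorem IsBasisFamily.coeff_eq_zero_of_sum_pushTo_eq_zero [Fintype ι]
    (hX : X.IsBasisFamily b d x) {t : ℝ} (ht : ∀ j, d j ≠ t) {c : ι → K}
    (hc : ∑ j, c j • X.pushTo b x t j = 0) {j : ι} (hbj : b j ≤ t) (htj : t < d j) :
    c j = 0 := by
  have hvanish : ∀ k ∈ Finset.univ, c k • X.pushTo b x t k ≠ 0 → b k ≤ t ∧ t < d k := by
    intro k _ hk
    by_contra! hdead
    by_cases hbk : b k ≤ t
    · rw [hX.pushTo_eq_zero_of_death_lt ((hdead hbk).lt_of_ne (ht k)), smul_zero] at hk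
      exact hk rfl
    · rw [pushTo_of_lt (not_le.mp hbk), smul_zero] at hk
      exact hk rfl
  have hsum : ∑ k : {k // b k ≤ t ∧ t < d k}, c k.1 • X.trans (b k.1) t k.2.1 (x k.1) = 0 := by
    rw [← hc, ← Finset.sum_filter_of_ne hvanish, ← Finset.sum_subtype_eq_sum_filter,
      Finset.subtype_univ]
    exact Finset.sum_congr rfl fun k _ => by rw [pushTo_of_le k.2.1]
  exact Fintype.linearIndependent_iff.mp (hX.2.2 t).1 (fun k => c k.1) hsum ⟨j, hbj, htj⟩

end PersistenceModule

namespace IsMatrixOf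

open PersistenceModule Finset

variable {K : Type u} [Field K] {X Y : PersistenceModule K} {ε : ℝ} {N M : ℕ}
  {α : EpsMorphism X Y ε} {bX dX : Fin N → ℝ} {x : ∀ i, X.space (bX i)}
  {bY dY : Fin M → ℝ} {y : ∀ j, Y.space (bY j)} {A : Matrix (Fin M) (Fin N) K}

theorem alive_of_ne_zero (hA : IsMatrixOf α bX dX x bY dY y A) {j : Fin M} {i : Fin N}
    (h : A j i ≠ 0) : bY j ≤ bX i + ε ∧ bX i + ε < dY j :=
  not_imp_comm.mp (hA.2 j i) h

theorem maps_pushTo (hA : IsMatrixOf α bX dX x bY dY y A) {s : ℝ} {i : Fin N}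
    (hbs : bX i ≤ s) :
    α.maps s (s + ε) rfl (X.pushTo bX x s i) = ∑ j, A j i • Y.pushTo bY y (s + ε) j := by
  rw [pushTo_of_le hbs, α.comm (bX i) s _ _ rfl rfl hbs, hA.1 i, map_sum]
  refine sum_congr rfl fun j _ => ?_
  by_cases hj : bY j ≤ bX i + ε
  · rw [map_smul, trans_pushTo hj]
  · rw [hA.2 j i fun h => hj h.1, zero_smul, map_zero, zero_smul]

theorem maps_pushTo_eq_sum_filter (hA : IsMatrixOf α bX dX x bY dY y A) {s : ℝ} {i : Fin N}
    (hbs : bX i ≤ s) :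
    α.maps s (s + ε) rfl (X.pushTo bX x s i)
      = ∑ j ∈ univ.filter (fun j => bY j ≤ bX i + ε ∧ bX i + ε < dY j),
          A j i • Y.pushTo bY y (s + ε) j := by
  rw [hA.maps_pushTo hbs, sum_filter_of_ne]
  exact fun j _ h => hA.alive_of_ne_zero (left_ne_zero_of_smul h)

/-- If `y j` outlived `x i` by more than `ε`, then at a time `t` just after `x i` dies, `α`
kills `x i` while `y j` is still an independent basis element at `t + ε`. -/
theorem death_le (hX : X.IsBasisFamily bX dX x) (hY : Y.IsBasisFamily bY dY y)
    (hA : IsMatrixOf α bX dX x bY dY y A) {j : Fin M} {i : Fin N} (h : A j i ≠ 0) :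
    dY j ≤ dX i + ε := by
  obtain ⟨hbj, -⟩ := hA.alive_of_ne_zero h
  have hbd := hX.birth_le_death i
  by_contra! hlt
  obtain ⟨t, ⟨hit, htj⟩, ht⟩ := (Set.Ioo_infinite (lt_sub_iff_add_lt.mpr hlt)).exists_notMem_finset
    (univ.image fun j' => dY j' - ε)
  have hsum : ∑ j', A j' i • Y.pushTo bY y (t + ε) j' = 0 := by
    rw [← hA.maps_pushTo (by linarith),
      hX.pushTo_eq_zero_of_death_lt hit, map_zero]
  refine h (hY.coeff_eq_zero_of_sum_pushTo_eq_zero (fun j' e => ht ?_) hsum (by linarith)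
    (lt_sub_iff_add_lt.mp htj))
  exact mem_image.mpr ⟨j', mem_univ _, by linarith⟩

end IsMatrixOf

theorem statement0_general {K : Type u} [Field K] {N M : ℕ}
    (X Y : PersistenceModule K) (ε : ℝ)
    (bX dX : Fin N → ℝ) (x : ∀ i, X.space (bX i))
    (bY dY : Fin M → ℝ) (y : ∀ j, Y.space (bY j))
    (hX : X.IsBasisFamily bX dX x) (hY : Y.IsBasisFamily bY dY y)
    (α : EpsMorphism X Y ε)
    (A : Matrix (Fin M) (Fin N) K)
    (hA : IsMatrixOf α bX dX x bY dY y A) :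
    (∀ (j : Fin M) (i : Fin N), A j i ≠ 0 →
        bY j ≤ bX i + ε ∧ bX i + ε < dY j ∧ dY j ≤ dX i + ε) ∧
    (∀ (s : ℝ) (lam : Fin N → K),
      α.maps s (s + ε) rfl
          (∑ i ∈ Finset.univ.filter (fun i => bX i ≤ s ∧ s < dX i),
            lam i • X.pushTo bX x s i)
        = ∑ i ∈ Finset.univ.filter (fun i => bX i ≤ s ∧ s < dX i),
            lam i •
              ∑ j ∈ Finset.univ.filter (fun j => bY j ≤ bX i + ε ∧ bX i + ε < dY j),
                A j i • Y.pushTo bY y (s + ε) j) := by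
  refine ⟨fun j i h => ⟨(hA.alive_of_ne_zero h).1, (hA.alive_of_ne_zero h).2,
    hA.death_le hX hY h⟩, fun s lam => ?_⟩
  rw [map_sum]
  refine Finset.sum_congr rfl fun i hi => ?_
  rw [map_smul, hA.maps_pushTo_eq_sum_filter (Finset.mem_filter.mp hi).2.1]

/-- If `A` is the matrix of an `ε`-morphism `α : X → Y` with respect to bases
`B_X`, `B_Y`, then (1) nonzero entries force
`birth(y_j) ≤ birth(x_i)+ε < death(y_j) ≤ death(x_i)+ε`, and (2) the matrix completely
determines `α` on every `X_s`. -/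
theorem statement0 {K : Type u} [Field K] {N M : ℕ}
    (X Y : PersistenceModule K) (ε : ℝ) (hε : 0 ≤ ε)
    (bX dX : Fin N → ℝ) (x : ∀ i, X.space (bX i))
    (bY dY : Fin M → ℝ) (y : ∀ j, Y.space (bY j))
    (hbdX : ∀ i, bX i < dX i) (hbdY : ∀ j, bY j < dY j)
    (hdistX : Function.Injective fun i => (bX i, dX i))
    (hdistY : Function.Injective fun j => (bY j, dY j))
    (hX : X.IsBasisFamily bX dX x) (hY : Y.IsBasisFamily bY dY y)
    (α : EpsMorphism X Y ε)
    (A : Matrix (Fin M) (Fin N) K)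
    (hA : IsMatrixOf α bX dX x bY dY y A) :
    (∀ (j : Fin M) (i : Fin N), A j i ≠ 0 →
        bY j ≤ bX i + ε ∧ bX i + ε < dY j ∧ dY j ≤ dX i + ε) ∧
    (∀ (s : ℝ) (lam : Fin N → K),
      α.maps s (s + ε) rfl
          (∑ i ∈ Finset.univ.filter (fun i => bX i ≤ s ∧ s < dX i),
            lam i • X.pushTo bX x s i)
        = ∑ i ∈ Finset.univ.filter (fun i => bX i ≤ s ∧ s < dX i),
            lam i •
              ∑ j ∈ Finset.univ.filter (fun j => bY j ≤ bX i + ε ∧ bX i + ε < dY j),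
                A j i • Y.pushTo bY y (s + ε) j) :=
  statement0_general X Y ε bX dX x bY dY y hX hY α A hA
end

section
/- Let X and Y be persistence modules over a field K with bases B_X = {x_1,…,x_N} and B_Y^{old} = {y_1,…,y_N} such that |birth(x_i) − birth(y_i)| < ε and |death(x_i) − death(y_i)| < ε for all i, and such that every interval of X and of Y has length greater than 2ε. Let α : X → Y be an ε-morphism, let k ≠ l be indices with birth(x_l) + ε < death(y_k), and let λ ∈ K. If the matrix Mat_{B_X}^{B_Y^{old}}(α) · e_{lk}^{−λ} is a basis transformation matrix for Y with respect to B_Y^{old}, and B_Y^{new} is the corresponding transformed basis, then Mat_{B_X}^{B_Y^{new}}(α) = e_{lk}^{λ}. -/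
open scoped BigOperators

universe u v

/-! The new basis is `y B` with `B = A e_{lk}^{-λ}`, and `B e_{lk}^{λ} = A`, so expanding
`α(x_i) = ∑ₘ A_{mi} y_m` in the new basis gives the columns of `e_{lk}^{λ}`, as long as every
nonzero entry of `e_{lk}^{λ}` is admissible. On the diagonal this is the proximity of the
intervals; for the entry `(k, l)` it is `birth(y_k) ≤ birth(x_l) + ε`. Since
`B_{kl} = A_{kl} - λ A_{kk}` and `A_{kk} = B_{kk} ≠ 0`, one of `A_{kl}`, `B_{kl}` is nonzero, and
the support condition of either matrix puts the birth of `y_k` early enough. -/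

namespace PersistenceModule

variable {K : Type u} [Field K] {M : ℕ} (Y : PersistenceModule K) {b : Fin M → ℝ}
  (y : ∀ j, Y.space (b j))

theorem trans_pushTo_s4 {s t : ℝ} {m : Fin M} (hm : b m ≤ s) (hst : s ≤ t) :
    Y.trans s t hst (Y.pushTo b y s m) = Y.pushTo b y t m := by
  rw [pushTo, dif_pos hm, pushTo, dif_pos (hm.trans hst), Y.trans_trans]

variable {B : Matrix (Fin M) (Fin M) K} (hB : ∀ m j, B m j ≠ 0 → b m ≤ b j)
include hB

theorem pushTo_transformBasis {h : ℝ} {j : Fin M} (hj : b j ≤ h) :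
    Y.pushTo b (transformBasis Y b y B) h j = ∑ m, B m j • Y.pushTo b y h m := by
  rw [pushTo, dif_pos hj, transformBasis, map_sum]
  refine Finset.sum_congr rfl fun m _ => ?_
  rw [map_smul]
  by_cases hBmj : B m j = 0
  · simp [hBmj]
  · rw [Y.trans_pushTo_s4 y (hB m j hBmj)]

theorem sum_smul_pushTo_transformBasis {h : ℝ} (c : Fin M → K)
    (hc : ∀ j, c j ≠ 0 → b j ≤ h) :
    ∑ j, c j • Y.pushTo b (transformBasis Y b y B) h j
      = ∑ m, B.mulVec c m • Y.pushTo b y h m := by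
  have hterm : ∀ j, c j • Y.pushTo b (transformBasis Y b y B) h j
      = ∑ m, (B m j * c j) • Y.pushTo b y h m := by
    intro j
    by_cases hcj : c j = 0
    · simp [hcj]
    · simp only [Y.pushTo_transformBasis y hB (hc j hcj), Finset.smul_sum, smul_smul, mul_comm]
  simp only [hterm, Matrix.mulVec, dotProduct, Finset.sum_smul]
  exact Finset.sum_comm

end PersistenceModule

theorem IsMatrixOf.transformBasis {K : Type u} [Field K] {X Y : PersistenceModule K} {ε : ℝ}
    {N M : ℕ} {α : EpsMorphism X Y ε} {bX dX : Fin N → ℝ} {x : ∀ i, X.space (bX i)}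
    {bY dY : Fin M → ℝ} {y : ∀ j, Y.space (bY j)} {A : Matrix (Fin M) (Fin N) K}
    (hA : IsMatrixOf α bX dX x bY dY y A) {B : Matrix (Fin M) (Fin M) K}
    {E : Matrix (Fin M) (Fin N) K} (hB : ∀ m j, B m j ≠ 0 → bY m ≤ bY j) (hBE : B * E = A)
    (hE : ∀ j i, E j i ≠ 0 → bY j ≤ bX i + ε ∧ bX i + ε < dY j) :
    IsMatrixOf α bX dX x bY dY (transformBasis Y bY y B) E := by
  refine ⟨fun i => ?_, fun j i hji => not_ne_iff.1 (mt (hE j i) hji)⟩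
  rw [hA.1 i, Y.sum_smul_pushTo_transformBasis y hB _ fun j hj => (hE j i hj).1, ← hBE]
  rfl

section ElementaryMatrix

variable {K : Type u} [Field K] {N : ℕ} (l k : Fin N) (μ : K)

theorem eMat_apply (j i : Fin N) :
    eMat l k μ j i = (if j = i then 1 else 0) + if j = k ∧ i = l then μ else 0 := by
  simp [eMat, Matrix.one_apply, Matrix.single, and_comm, eq_comm]

theorem eMat_apply_ne_zero {j i : Fin N} (h : eMat l k μ j i ≠ 0) :
    j = i ∨ (j = k ∧ i = l ∧ μ ≠ 0) := by
  rw [eMat_apply] at h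
  by_cases hji : j = i
  · exact .inl hji
  · by_cases hjk : j = k ∧ i = l
    · rw [if_neg hji, if_pos hjk, zero_add] at h
      exact .inr ⟨hjk.1, hjk.2, h⟩
    · simp [hji, hjk] at h

theorem eMat_neg_mul_eMat {k l : Fin N} (hkl : k ≠ l) : eMat l k (-μ) * eMat l k μ = 1 := by
  simp only [eMat, add_mul, mul_add, Matrix.one_mul, Matrix.mul_one,
    Matrix.single_mul_single_of_ne _ k l k hkl.symm, add_zero, add_assoc, ← Matrix.single_add,
    neg_add_cancel, Matrix.single_zero]

variable {M : ℕ} (A : Matrix (Fin M) (Fin N) K) (j : Fin M)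

theorem mul_eMat_apply_of_ne {i : Fin N} (hil : i ≠ l) : (A * eMat l k μ) j i = A j i := by
  rw [eMat, Matrix.mul_add, Matrix.mul_one, Matrix.add_apply,
    Matrix.mul_single_apply_of_ne _ _ _ _ _ hil, add_zero]

theorem mul_eMat_apply_same : (A * eMat l k μ) j l = A j l + A j k * μ := by
  rw [eMat, Matrix.mul_add, Matrix.mul_one, Matrix.add_apply, Matrix.mul_single_apply_same]

end ElementaryMatrix

theorem apply_ne_zero_or_mul_eMat_neg_apply_ne_zero {K : Type u} [Field K] {N : ℕ}
    {A : Matrix (Fin N) (Fin N) K} {k l : Fin N} {μ : K} (hkk : A k k ≠ 0) (hμ : μ ≠ 0) :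
    A k l ≠ 0 ∨ (A * eMat l k (-μ)) k l ≠ 0 := by
  by_contra! h
  rw [mul_eMat_apply_same, h.1, zero_add, mul_neg, neg_eq_zero] at h
  exact mul_ne_zero hkk hμ h.2

theorem statement4_general {K : Type u} [Field K] {N : ℕ}
    (X Y : PersistenceModule K) (ε : ℝ)
    (bX dX bY dY : Fin N → ℝ)
    (x : ∀ i, X.space (bX i)) (y : ∀ i, Y.space (bY i))
    (hb : ∀ i, |bX i - bY i| < ε) (hd : ∀ i, |dX i - dY i| < ε)
    (hlenX : ∀ i, 2 * ε < dX i - bX i)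
    (k l : Fin N) (hkl : k ≠ l) (lam : K)
    (hlk : bX l + ε < dY k)
    (α : EpsMorphism X Y ε)
    (A : Matrix (Fin N) (Fin N) K)
    (hA : IsMatrixOf α bX dX x bY dY y A)
    (hAtrans : IsBasisTransformMatrix bY dY (A * eMat l k (-lam))) :
    IsMatrixOf α bX dX x bY dY (transformBasis Y bY y (A * eMat l k (-lam)))
      (eMat l k lam) := by
  have hbirth : ∀ i, bY i ≤ bX i + ε := fun i => by linarith [(abs_lt.1 (hb i)).1]
  have hdeath : ∀ i, bX i + ε < dY i := fun i => by
    linarith [(abs_lt.1 (hd i)).2, hlenX i]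
  have hbirth_kl : lam ≠ 0 → bY k ≤ bX l + ε := by
    intro hlam
    have hAkk : A k k ≠ 0 := mul_eMat_apply_of_ne l k _ A k hkl ▸ hAtrans.1 k
    rcases apply_ne_zero_or_mul_eMat_neg_apply_ne_zero hAkk hlam with hAkl | hBkl
    · by_contra hlt
      exact hAkl (hA.2 k l fun h => hlt h.1)
    · exact (hAtrans.2 k l hBkl).1.trans (hbirth l)
  refine hA.transformBasis (fun m j h => (hAtrans.2 m j h).1)
    (by rw [Matrix.mul_assoc, eMat_neg_mul_eMat lam hkl, Matrix.mul_one]) fun j i hji => ?_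
  rcases eMat_apply_ne_zero l k lam hji with rfl | ⟨rfl, rfl, hlam⟩
  · exact ⟨hbirth j, hdeath j⟩
  · exact ⟨hbirth_kl hlam, hlk⟩

/-- Under the same proximity and length hypotheses as before, if
`Mat(α) · e_{lk}^{-λ}` is a basis transformation matrix for `Y` and `birth(x_l)+ε < death(y_k)`,
then with respect to the transformed basis the matrix of `α` is the elementary matrix
`e_{lk}^{λ}`. -/
theorem statement4 {K : Type u} [Field K] {N : ℕ}
    (X Y : PersistenceModule K) (ε : ℝ) (hε : 0 ≤ ε)
    (bX dX bY dY : Fin N → ℝ)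
    (x : ∀ i, X.space (bX i)) (y : ∀ i, Y.space (bY i))
    (hbdX : ∀ i, bX i < dX i) (hbdY : ∀ i, bY i < dY i)
    (hdistX : Function.Injective fun i => (bX i, dX i))
    (hdistY : Function.Injective fun i => (bY i, dY i))
    (hX : X.IsBasisFamily bX dX x) (hY : Y.IsBasisFamily bY dY y)
    (hb : ∀ i, |bX i - bY i| < ε) (hd : ∀ i, |dX i - dY i| < ε)
    (hlenX : ∀ i, 2 * ε < dX i - bX i) (hlenY : ∀ i, 2 * ε < dY i - bY i)
    (k l : Fin N) (hkl : k ≠ l) (lam : K)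
    (hlk : bX l + ε < dY k)
    (α : EpsMorphism X Y ε)
    (A : Matrix (Fin N) (Fin N) K)
    (hA : IsMatrixOf α bX dX x bY dY y A)
    (hAtrans : IsBasisTransformMatrix bY dY (A * eMat l k (-lam))) :
    IsMatrixOf α bX dX x bY dY (transformBasis Y bY y (A * eMat l k (-lam)))
      (eMat l k lam) :=
  statement4_general X Y ε bX dX bY dY x y hb hd hlenX k l hkl lam hlk α A hA hAtrans
end

section
/- Let a < b be real numbers and let f : [a, b] → ℝ be a 2-Lipschitz function with f(b) = 0 and f(t) > 0 for all t ∈ [a, b). Define a sequence by s₀ = a and s_{n+1} = s_n + f(s_n)/4. Then s_n ∈ [a, b) for all n, the sequence (s_n) is strictly increasing, and lim_{n→∞} s_n = b. -/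
/-- Let `f : [a,b] → ℝ` be `2`-Lipschitz with `f b = 0` and `f t > 0` on
`[a, b)`.  The recursively defined sequence `s 0 = a`, `s (n+1) = s n + f (s n) / 4` stays in
`[a, b)`, is strictly increasing, and converges to `b`. -/
theorem statement12 (a b : ℝ) (hab : a < b) (f : ℝ → ℝ)
    (hlip : ∀ s ∈ Set.Icc a b, ∀ t ∈ Set.Icc a b, |f s - f t| ≤ 2 * |s - t|)
    (hfb : f b = 0)
    (hpos : ∀ t ∈ Set.Ico a b, 0 < f t)
    (s : ℕ → ℝ) (hs0 : s 0 = a)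
    (hrec : ∀ n, s (n + 1) = s n + f (s n) / 4) :
    (∀ n, s n ∈ Set.Ico a b) ∧ StrictMono s ∧
      Filter.Tendsto s Filter.atTop (nhds b) := by
  -- f t ≤ 2*(b - t) on [a,b]
  have hub : ∀ t ∈ Set.Icc a b, f t ≤ 2 * (b - t) := by
    intro t ht
    have := hlip t ht b ⟨hab.le, le_rfl⟩
    rw [hfb, sub_zero, abs_sub_comm, abs_of_nonneg (sub_nonneg.2 ht.2)] at this
    exact (le_abs_self _).trans this
  have hmem : ∀ n, s n ∈ Set.Ico a b := by
    intro n
    induction n with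
    | zero => rw [hs0]; exact ⟨le_rfl, hab⟩
    | succ n ih =>
      have hp := hpos _ ih
      have hu := hub (s n) ⟨ih.1, ih.2.le⟩
      obtain ⟨ih1, ih2⟩ := ih
      constructor
      · rw [hrec]; nlinarith
      · rw [hrec]; nlinarith
  have hmono : StrictMono s := by
    apply strictMono_nat_of_lt_succ
    intro n
    have hp := hpos _ (hmem n)
    rw [hrec]; linarith
  refine ⟨hmem, hmono, ?_⟩
  have hbdd : BddAbove (Set.range s) := ⟨b, by rintro x ⟨n, rfl⟩; exact (hmem n).2.le⟩
  set L := ⨆ n, s n with hL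
  have hsle : ∀ n, s n ≤ L := fun n => le_ciSup hbdd n
  have htend : Filter.Tendsto s Filter.atTop (nhds L) :=
    tendsto_atTop_ciSup hmono.monotone hbdd
  have hLmem : L ∈ Set.Icc a b := by
    constructor
    · exact (hs0 ▸ hsle 0 : a ≤ L)
    · exact ciSup_le fun n => (hmem n).2.le
  -- f (s n) → f L
  have h1 : Filter.Tendsto (fun n => f (s n)) Filter.atTop (nhds (f L)) := by
    rw [tendsto_iff_dist_tendsto_zero]
    have hb : ∀ n, dist (f (s n)) (f L) ≤ 2 * (L - s n) := by
      intro n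
      have h := hlip (s n) ⟨(hmem n).1, (hmem n).2.le⟩ L hLmem
      rw [abs_sub_comm (s n) L, abs_of_nonneg (sub_nonneg.2 (hsle n))] at h
      rw [Real.dist_eq]
      exact h
    have ht0 : Filter.Tendsto (fun n => 2 * (L - s n)) Filter.atTop (nhds 0) := by
      have := ((tendsto_const_nhds (x := L)).sub htend).const_mul (2 : ℝ)
      simpa using this
    exact squeeze_zero (fun n => dist_nonneg) hb ht0
  -- f (s n) → 0
  have h2 : Filter.Tendsto (fun n => f (s n)) Filter.atTop (nhds 0) := by
    have hshift : Filter.Tendsto (fun n => s (n + 1)) Filter.atTop (nhds L) :=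
      htend.comp (Filter.tendsto_add_atTop_nat 1)
    have : Filter.Tendsto (fun n => 4 * (s (n + 1) - s n)) Filter.atTop (nhds 0) := by
      have := (hshift.sub htend).const_mul (4 : ℝ)
      simpa using this
    refine this.congr fun n => ?_
    rw [hrec]; ring
  have hfL : f L = 0 := tendsto_nhds_unique h1 h2
  have hLb : L = b := by
    by_contra h
    have : L ∈ Set.Ico a b := ⟨hLmem.1, lt_of_le_of_ne hLmem.2 h⟩
    exact (hpos L this).ne' hfL
  exact hLb ▸ htend
end
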